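/- arXiv:1601.00942 — 2 statements merged into one kernel-verified Lean document; each statement's English description precedes it below -/
import Mathlib

section
/- The self-consistent map conserves the quantity C = Σ_{k=1}^N γ_k y_k + κ²/2: if (x', y', κ', θ') is the image of (x, y, κ, θ) under one iteration of the self-consistent map, then Σ_k γ_k y'_k + (κ')²/2 = Σ_k γ_k y_k + κ²/2. -/
open Real

/-- Conservation of `C = Σ γ_k y_k + κ²/2` under one step of the self-consistent map:
with `η = Σ γ_k sin(x_k − θ)`, `κ' = √(κ² + η²) + η` and
`y'_k = y_k − κ' sin(x_k − θ)`, one has `Σ γ_k y'_k + κ'²/2 = Σ γ_k y k + κ²/2`. -/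
theorem scMap_conserved (N : ℕ) (γ x y : Fin N → ℝ) (κ θ : ℝ)
    (η κ' : ℝ) (y' : Fin N → ℝ)
    (hη : η = ∑ k, γ k * Real.sin (x k - θ))
    (hκ' : κ' = Real.sqrt (κ ^ 2 + η ^ 2) + η)
    (hy' : ∀ k, y' k = y k - κ' * Real.sin (x k - θ)) :
    (∑ k, γ k * y' k) + κ' ^ 2 / 2 = (∑ k, γ k * y k) + κ ^ 2 / 2 := by
  have hsq : (κ' - η) ^ 2 = κ ^ 2 + η ^ 2 := by
    rw [hκ']
    simp only [add_sub_cancel_right]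
    exact Real.sq_sqrt (by positivity)
  have hkey : κ' ^ 2 = κ ^ 2 + 2 * η * κ' := by nlinarith [hsq]
  have hsum : (∑ k, γ k * y' k) = (∑ k, γ k * y k) - κ' * η := by
    simp only [hy', mul_sub]
    rw [Finset.sum_sub_distrib, hη, Finset.mul_sum]
    congr 1
    exact Finset.sum_congr rfl fun k _ => by ring
  rw [hsum, hkey]
  ring
end

section
/- Replication property of the self-consistent map: let T_N^γ denote the self-consistent map with N oscillators, all intensities equal to γ. Define the duplication D : ℝ^{2N+2} → ℝ^{4N+2} by repeating the oscillator coordinates twice, D(x, y, κ, θ) = (x, x, y, y, κ, θ) (i.e., x-coordinates (x₁,…,x_N,x₁,…,x_N) and likewise for y). Then T_{2N}^{γ/2} ∘ D = D ∘ T_N^γ. In particular, if z⁰ generates a periodic orbit of period M for T_N^γ, then D(z⁰) generates a periodic orbit of period M for T_{2N}^{γ/2}. -/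
/-- The self-consistent map with `N` oscillators, equal intensities `γ` and
parameter `Ω`, acting on states `(x, y, κ, θ)`. -/
noncomputable def scMap (N : ℕ) (γ Ω : ℝ)
    (s : (Fin N → ℝ) × (Fin N → ℝ) × ℝ × ℝ) :
    (Fin N → ℝ) × (Fin N → ℝ) × ℝ × ℝ :=
  let x := s.1; let y := s.2.1; let κ := s.2.2.1; let θ := s.2.2.2
  let η := γ * ∑ k, Real.sin (x k - θ)
  let κ' := Real.sqrt (κ ^ 2 + η ^ 2) + η
  let y' := fun k => y k - κ' * Real.sin (x k - θ)
  let x' := fun k => x k + y' k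
  let θ' := θ - Ω - (γ / κ') * ∑ k, Real.cos (x k - θ)
  (x', y', κ', θ')

/-- Duplication of the oscillator coordinates: each of the `x`- and `y`-vectors
is repeated twice, `(κ, θ)` unchanged. -/
def dupVec (N : ℕ) (hN : 0 < N) (f : Fin N → ℝ) : Fin (2 * N) → ℝ :=
  fun k => f ⟨k.1 % N, Nat.mod_lt _ hN⟩

/-- The duplication map `D(x, y, κ, θ) = (x, x, y, y, κ, θ)`. -/
def dup (N : ℕ) (hN : 0 < N) (s : (Fin N → ℝ) × (Fin N → ℝ) × ℝ × ℝ) :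
    (Fin (2 * N) → ℝ) × (Fin (2 * N) → ℝ) × ℝ × ℝ :=
  (dupVec N hN s.1, dupVec N hN s.2.1, s.2.2.1, s.2.2.2)

lemma sum_dupVec (N : ℕ) (hN : 0 < N) (F : Fin N → ℝ) :
    (∑ k : Fin (2 * N), F ⟨k.1 % N, Nat.mod_lt _ hN⟩) = 2 * ∑ k, F k := by
  have h : (∑ k : Fin (2 * N), F ⟨k.1 % N, Nat.mod_lt _ hN⟩)
      = ∑ k ∈ Finset.range (2 * N), F ⟨k % N, Nat.mod_lt _ hN⟩ :=
    Fin.sum_univ_eq_sum_range (fun n => F ⟨n % N, Nat.mod_lt _ hN⟩) (2 * N)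
  rw [h, two_mul, Finset.sum_range_add, two_mul]
  congr 1
  · rw [← Fin.sum_univ_eq_sum_range fun k => F ⟨k % N, Nat.mod_lt _ hN⟩]
    exact Finset.sum_congr rfl fun k _ => by
      congr 1; exact Fin.ext (Nat.mod_eq_of_lt k.2)
  · rw [← Fin.sum_univ_eq_sum_range fun k => F ⟨(N + k) % N, Nat.mod_lt _ hN⟩]
    exact Finset.sum_congr rfl fun k _ => by
      congr 1
      exact Fin.ext (by simp [Nat.add_mod_left, Nat.mod_eq_of_lt k.2])

/-- Replication property: `T_{2N}^{γ/2} ∘ D = D ∘ T_N^γ`; in particular the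
duplication of a periodic orbit of period `M` of `T_N^γ` is a periodic orbit of
period `M` of `T_{2N}^{γ/2}`. -/
theorem scMap_replication (N : ℕ) (hN : 0 < N) (γ Ω : ℝ) :
    (∀ s, scMap (2 * N) (γ / 2) Ω (dup N hN s) = dup N hN (scMap N γ Ω s)) ∧
    (∀ (z : (Fin N → ℝ) × (Fin N → ℝ) × ℝ × ℝ) (M : ℕ),
      (scMap N γ Ω)^[M] z = z →
      (scMap (2 * N) (γ / 2) Ω)^[M] (dup N hN z) = dup N hN z) := by
  have key : ∀ s, scMap (2 * N) (γ / 2) Ω (dup N hN s) = dup N hN (scMap N γ Ω s) := by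
    intro ⟨x, y, κ, θ⟩
    have hs : (γ / 2) * ∑ k : Fin (2 * N),
        Real.sin (x ⟨k.1 % N, Nat.mod_lt _ hN⟩ - θ) = γ * ∑ k, Real.sin (x k - θ) := by
      rw [sum_dupVec N hN (fun k => Real.sin (x k - θ))]; ring
    have hc : ∑ k : Fin (2 * N), Real.cos (x ⟨k.1 % N, Nat.mod_lt _ hN⟩ - θ)
        = 2 * ∑ k, Real.cos (x k - θ) :=
      sum_dupVec N hN (fun k => Real.cos (x k - θ))
    simp only [scMap, dup, dupVec]
    refine Prod.ext ?_ (Prod.ext ?_ (Prod.ext ?_ ?_))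
    · funext k
      simp only [dupVec, hs]
    · funext k
      simp only [dupVec, hs]
    · simp only [hs]
    · simp only [hs, hc]; ring
  refine ⟨key, fun z M hz => ?_⟩
  have semi : Function.Semiconj (dup N hN) (scMap N γ Ω) (scMap (2 * N) (γ / 2) Ω) :=
    fun s => (key s).symm
  have := (semi.iterate_right M) z
  rw [hz] at this
  exact this.symm
end
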